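/- arXiv:2209.01151 — 2 statements merged into one kernel-verified Lean document; each statement's English description precedes it below -/
import Mathlib

section
/- The homogeneous sextic polynomial s(x₀,…,x₄) given explicitly in the Veronese example equals the sum of squares 4g₁² + 4g₂² + g₃² + g₄² + 3g₅² + 12g₆² + 12g₇², where g₁ = −x₁²x₂+x₀x₁x₂−2x₂x₃²+x₂³−x₁x₃x₄+2x₀x₃x₄+x₂x₄², g₂ = x₀²x₃−x₀x₁x₃+2x₂²x₃−x₃³+x₀x₂x₄−2x₁x₂x₄−x₃x₄², g₃ = 2x₀x₁x₄−x₀x₂x₃−x₁x₂x₃+x₂²x₄+x₃²x₄−2x₄³, g₄ = x₀²x₁−x₀x₁²+x₀x₂²−x₀x₄²−x₁x₃²+x₁x₄², g₅ = x₀x₂x₃−x₁x₂x₃+x₂²x₄−x₃²x₄, g₆ = x₂x₃²−x₀x₃x₄−x₂x₄², g₇ = x₂²x₃−x₁x₂x₄−x₃x₄². In particular s is nonnegative on ℝ⁵. -/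
theorem eq_and_nonneg_of_eq_of_nonneg {α : Type*} [LE α] [Zero α] {s t : α} (h : s = t)
    (ht : 0 ≤ t) : s = t ∧ 0 ≤ s :=
  ⟨h, h ▸ ht⟩

set_option maxHeartbeats 2000000 in
/-- The explicit sextic `s` from the Veronese example equals the stated sum of squares
`4g₁² + 4g₂² + g₃² + g₄² + 3g₅² + 12g₆² + 12g₇²`; in particular it is nonnegative on ℝ⁵. -/
theorem veronese_sextic_sos (x0 x1 x2 x3 x4 : ℝ) :
    (x0^4*x1^2 - 2*x0^3*x1^3 + x0^2*x1^4 + 2*x0^3*x1*x2^2 + 2*x0^2*x1^2*x2^2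
      - 8*x0*x1^3*x2^2 + 4*x1^4*x2^2 + x0^2*x2^4 + 8*x0*x1*x2^4 - 8*x1^2*x2^4 + 4*x2^6
      + 4*x0^4*x3^2 - 8*x0^3*x1*x3^2 + 2*x0^2*x1^2*x3^2 + 2*x0*x1^3*x3^2
      + 20*x0^2*x2^2*x3^2 - 38*x0*x1*x2^2*x3^2 + 20*x1^2*x2^2*x3^2 + 12*x2^4*x3^2
      - 8*x0^2*x3^4 + 8*x0*x1*x3^4 + x1^2*x3^4 + 12*x2^2*x3^4 + 4*x3^6
      + 8*x0^3*x2*x3*x4 - 12*x0^2*x1*x2*x3*x4 - 12*x0*x1^2*x2*x3*x4 + 8*x1^3*x2*x3*x4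
      + 36*x0*x2^3*x3*x4 - 72*x1*x2^3*x3*x4 - 72*x0*x2*x3^3*x4 + 36*x1*x2*x3^3*x4
      - 2*x0^3*x1*x4^2 + 8*x0^2*x1^2*x4^2 - 2*x0*x1^3*x4^2 + 2*x0^2*x2^2*x4^2
      - 2*x0*x1*x2^2*x4^2 + 20*x1^2*x2^2*x4^2 + 12*x2^4*x4^2 + 20*x0^2*x3^2*x4^2
      - 2*x0*x1*x3^2*x4^2 + 2*x1^2*x3^2*x4^2 - 84*x2^2*x3^2*x4^2 + 12*x3^4*x4^2
      + 36*x0*x2*x3*x4^3 + 36*x1*x2*x3*x4^3 + x0^2*x4^4 - 10*x0*x1*x4^4 + x1^2*x4^4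
      + 12*x2^2*x4^4 + 12*x3^2*x4^4 + 4*x4^6
    = 4*(-x1^2*x2 + x0*x1*x2 - 2*x2*x3^2 + x2^3 - x1*x3*x4 + 2*x0*x3*x4 + x2*x4^2)^2
      + 4*(x0^2*x3 - x0*x1*x3 + 2*x2^2*x3 - x3^3 + x0*x2*x4 - 2*x1*x2*x4 - x3*x4^2)^2
      + (2*x0*x1*x4 - x0*x2*x3 - x1*x2*x3 + x2^2*x4 + x3^2*x4 - 2*x4^3)^2
      + (x0^2*x1 - x0*x1^2 + x0*x2^2 - x0*x4^2 - x1*x3^2 + x1*x4^2)^2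
      + 3*(x0*x2*x3 - x1*x2*x3 + x2^2*x4 - x3^2*x4)^2
      + 12*(x2*x3^2 - x0*x3*x4 - x2*x4^2)^2
      + 12*(x2^2*x3 - x1*x2*x4 - x3*x4^2)^2) ∧
    0 ≤ x0^4*x1^2 - 2*x0^3*x1^3 + x0^2*x1^4 + 2*x0^3*x1*x2^2 + 2*x0^2*x1^2*x2^2
      - 8*x0*x1^3*x2^2 + 4*x1^4*x2^2 + x0^2*x2^4 + 8*x0*x1*x2^4 - 8*x1^2*x2^4 + 4*x2^6
      + 4*x0^4*x3^2 - 8*x0^3*x1*x3^2 + 2*x0^2*x1^2*x3^2 + 2*x0*x1^3*x3^2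
      + 20*x0^2*x2^2*x3^2 - 38*x0*x1*x2^2*x3^2 + 20*x1^2*x2^2*x3^2 + 12*x2^4*x3^2
      - 8*x0^2*x3^4 + 8*x0*x1*x3^4 + x1^2*x3^4 + 12*x2^2*x3^4 + 4*x3^6
      + 8*x0^3*x2*x3*x4 - 12*x0^2*x1*x2*x3*x4 - 12*x0*x1^2*x2*x3*x4 + 8*x1^3*x2*x3*x4
      + 36*x0*x2^3*x3*x4 - 72*x1*x2^3*x3*x4 - 72*x0*x2*x3^3*x4 + 36*x1*x2*x3^3*x4
      - 2*x0^3*x1*x4^2 + 8*x0^2*x1^2*x4^2 - 2*x0*x1^3*x4^2 + 2*x0^2*x2^2*x4^2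
      - 2*x0*x1*x2^2*x4^2 + 20*x1^2*x2^2*x4^2 + 12*x2^4*x4^2 + 20*x0^2*x3^2*x4^2
      - 2*x0*x1*x3^2*x4^2 + 2*x1^2*x3^2*x4^2 - 84*x2^2*x3^2*x4^2 + 12*x3^4*x4^2
      + 36*x0*x2*x3*x4^3 + 36*x1*x2*x3*x4^3 + x0^2*x4^4 - 10*x0*x1*x4^4 + x1^2*x4^4
      + 12*x2^2*x4^4 + 12*x3^2*x4^4 + 4*x4^6 :=
  eq_and_nonneg_of_eq_of_nonneg (by ring) (by positivity)
end

section
/- The quartic polynomial f₂(x₀,x₁,x₂) = (2x₀² + x₀x₁ + 2x₀x₂ − x₁²)² + (x₀² − x₁² − x₂²)² + (x₀² − 2x₀x₂ − x₁² − x₁x₂ − 3x₂²)² is nonnegative on ℝ³, and its real projective zero locus in ℙ²(ℝ) consists of exactly two points, namely [1 : 0 : −1] and [1 : −1 : 0] (in the affine chart x₀ = 1: the points (0,−1) and (−1,0)). -/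
/-!
Write `f₂ = q₁² + q₂² + q₃²` with the three quadratic forms in the order given. Both
`q₂ - q₃ = x₂ (2x₀ + x₁ + 2x₂)` and `q₁ - q₂ = x₀ (x₀ + x₁) + x₂ (2x₀ + x₂)` factor, and on the
line `2x₀ + x₁ + 2x₂ = 0` one has `x₀ (2x₀ + x₁ + 2x₂) - q₁ = x₁²`. So the three conics `qᵢ = 0`
meet, over any domain in which `2 ≠ 0`, exactly in the points `[1 : 0 : -1]` and `[1 : -1 : 0]`,
and a real sum of squares vanishes only where each square does.
-/

theorem sq_add_sq_add_sq_eq_zero_iff {R : Type*} [Ring R] [LinearOrder R] [IsStrictOrderedRing R]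
    {a b c : R} : a ^ 2 + b ^ 2 + c ^ 2 = 0 ↔ a = 0 ∧ b = 0 ∧ c = 0 := by
  rw [add_eq_zero_iff_of_nonneg (by positivity) (sq_nonneg c),
    add_eq_zero_iff_of_nonneg (sq_nonneg a) (sq_nonneg b)]
  simp only [sq_eq_zero_iff, and_assoc]

theorem bordiga_conics_common_zero_iff {R : Type*} [CommRing R] [NoZeroDivisors R]
    (h2 : (2 : R) ≠ 0) {x0 x1 x2 : R} :
    (2*x0^2 + x0*x1 + 2*x0*x2 - x1^2 = 0 ∧ x0^2 - x1^2 - x2^2 = 0 ∧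
        x0^2 - 2*x0*x2 - x1^2 - x1*x2 - 3*x2^2 = 0) ↔
      (x1 = 0 ∧ x2 = -x0) ∨ (x2 = 0 ∧ x1 = -x0) := by
  constructor
  · rintro ⟨hq1, hq2, hq3⟩
    have h23 : x2 * (2*x0 + x1 + 2*x2) = 0 := by linear_combination hq2 - hq3
    rcases mul_eq_zero.mp h23 with hx2 | hline
    · have h12 : x0 * (x0 + x1) = 0 := by linear_combination hq1 - hq2 + (-2*x0 - x2) * hx2
      rcases mul_eq_zero.mp h12 with hx0 | hsum
      · have hx1 : x1 = 0 := sq_eq_zero_iff.mp (by linear_combination -hq2 + x0 * hx0 - x2 * hx2)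
        exact Or.inr ⟨hx2, by rw [hx1, hx0, neg_zero]⟩
      · exact Or.inr ⟨hx2, eq_neg_of_add_eq_zero_right hsum⟩
    · have hx1 : x1 = 0 := sq_eq_zero_iff.mp (by linear_combination x0 * hline - hq1)
      have hx02 : 2 * (x2 + x0) = 0 := by linear_combination hline - hx1
      exact Or.inl ⟨hx1, eq_neg_of_add_eq_zero_left <| (mul_eq_zero.mp hx02).resolve_left h2⟩
  · rintro (⟨rfl, rfl⟩ | ⟨rfl, rfl⟩) <;> refine ⟨?_, ?_, ?_⟩ <;> ring

/-- The quartic `f₂ = (2x₀² + x₀x₁ + 2x₀x₂ − x₁²)² + (x₀² − x₁² − x₂²)² +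
(x₀² − 2x₀x₂ − x₁² − x₁x₂ − 3x₂²)²` is nonnegative on ℝ³, and its real projective zero
locus consists of exactly the two points `[1 : 0 : −1]` and `[1 : −1 : 0]`. -/
theorem bordiga_sos_quartic_two_real_zeros (x0 x1 x2 : ℝ) :
    0 ≤ (2*x0^2 + x0*x1 + 2*x0*x2 - x1^2)^2 + (x0^2 - x1^2 - x2^2)^2
        + (x0^2 - 2*x0*x2 - x1^2 - x1*x2 - 3*x2^2)^2 ∧
    (¬(x0 = 0 ∧ x1 = 0 ∧ x2 = 0) →
      ((2*x0^2 + x0*x1 + 2*x0*x2 - x1^2)^2 + (x0^2 - x1^2 - x2^2)^2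
        + (x0^2 - 2*x0*x2 - x1^2 - x1*x2 - 3*x2^2)^2 = 0 ↔
        ∃ c : ℝ, c ≠ 0 ∧
          ((x0, x1, x2) = (c, 0, -c) ∨ (x0, x1, x2) = (c, -c, 0)))) := by
  refine ⟨by positivity, fun hnz => ?_⟩
  rw [sq_add_sq_add_sq_eq_zero_iff, bordiga_conics_common_zero_iff two_ne_zero]
  constructor
  · rintro (⟨rfl, rfl⟩ | ⟨rfl, rfl⟩)
    · exact ⟨x0, fun h => hnz ⟨h, rfl, by simp [h]⟩, Or.inl rfl⟩
    · exact ⟨x0, fun h => hnz ⟨h, by simp [h], rfl⟩, Or.inr rfl⟩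
  · rintro ⟨c, -, h | h⟩ <;> simp only [Prod.mk.injEq] at h <;> obtain ⟨rfl, rfl, rfl⟩ := h
    · exact Or.inl ⟨rfl, rfl⟩
    · exact Or.inr ⟨rfl, rfl⟩
end
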